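/- arXiv:2406.19823 — 3 statements merged into one kernel-verified Lean document; each statement's English description precedes it below -/
import Mathlib

section
/- For m ≥ 1 and h ≥ 0, the generating function for partitions in B_{a,b,k}(m) with largest part kh + b equals ∑_{i ≥ 0} μ^{m-h-i-1} ν^{h+i+1} q^{ma + kh² + kh + (b-a)(h+i+1)} [h+i choose h]_{q^k} [m-h-i-1 choose h]_{q^k}. -/
noncomputable section

/-- The q-Pochhammer symbol (q^t; q^t)_n as a polynomial in q. -/
def qpoch (t n : ℕ) : Polynomial ℚ :=
  ∏ i ∈ Finset.range n, (1 - Polynomial.X ^ (t * (i + 1)))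

/-- The Gaussian binomial coefficient [A choose B] in base q^t:
(q^t;q^t)_A / ((q^t;q^t)_B (q^t;q^t)_{A-B}) when 0 ≤ B ≤ A, and 0 otherwise. -/
def gauss (t : ℕ) (A B : ℤ) : Polynomial ℚ :=
  if 0 ≤ B ∧ B ≤ A then
    qpoch t A.toNat / (qpoch t B.toNat * qpoch t (A - B).toNat)
  else 0
/-- Formal power series in three variables x/μ = X 0, z/ν = X 1, q = X 2. -/
abbrev S3 := MvPowerSeries (Fin 3) ℚ

/-- Product topology with discrete coefficients, so that infinite sums and
products of power series are meaningful. -/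
instance : TopologicalSpace S3 :=
  @Pi.topologicalSpace ((Fin 3) →₀ ℕ) (fun _ => ℚ) (fun _ => ⊥)

/-- Interpret a polynomial in q as a power series in the variable X 2. -/
def pq (p : Polynomial ℚ) : S3 := Polynomial.aeval (MvPowerSeries.X 2 : S3) p
/-- The basis set B_{a,b,k}(m): partitions (non-increasing lists) with m parts,
each part ≡ a or b (mod k), last part a or b, and consecutive parts differing
by less than k. -/
def IsBabk (a b k m : ℕ) (l : List ℕ) : Prop :=
  l.length = m ∧ l.Pairwise (· ≥ ·) ∧
    (∀ x ∈ l, x % k = a % k ∨ x % k = b % k) ∧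
    (l.getLast? = some a ∨ l.getLast? = some b) ∧
    l.Chain' (fun x y => x < y + k)

open MvPowerSeries in
/-- g_{a,b,k}(m, lp): the generating function ∑ μ^{ℓ_a(λ)} ν^{ℓ_b(λ)} q^{|λ|}
(μ = X 0, ν = X 1, q = X 2) over partitions λ in B_{a,b,k}(m) with largest
part lp. -/
def gab (a b k m lp : ℕ) : S3 :=
  ∑' l : {l : List ℕ // IsBabk a b k m l ∧ l.head? = some lp},
    (X 0 : S3) ^ (l.1.filter (fun x => x % k = a % k)).length *
      (X 1 : S3) ^ (l.1.filter (fun x => x % k = b % k)).length *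
        (X 2 : S3) ^ l.1.sum

/-!
The parts of a partition in `B_{a,b,k}(m)` lie on the chain `a < b < k + a < k + b < ⋯`, and the
gap condition says that each part is at most one step of this chain above the next one. Removing
the largest part therefore gives the recursions
`g(m+1, kh+b) = ν q^{kh+b} (g(m, kh+b) + g(m, kh+a))`,
`g(m+1, k(h+1)+a) = μ q^{k(h+1)+a} (g(m, k(h+1)+a) + g(m, kh+b))` and `g(m+1, a) = μ q^a g(m, a)`.
Graded by the numbers `n_a`, `n_b` of parts `≡ a` and `≡ b`, the claimed formula for the largest
part `kh + b`, together with the companion formula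
`μ^{n_a} ν^{n_b} q^{n_a a + n_b b + k(h+1)^2} [n_b - 1, h]_{q^k} [n_a, h + 1]_{q^k}`
for the largest part `k(h+1) + a`, satisfies these recursions term by term, by the q-Pascal rule.
-/

open Finset MvPowerSeries

section QBinomial

variable {R : Type*}

def qbinom [Semiring R] (z : R) : ℕ → ℕ → R
  | _, 0 => 1
  | 0, _ + 1 => 0
  | n + 1, B + 1 => qbinom z n B + z ^ (B + 1) * qbinom z n (B + 1)

section Semiring

variable [Semiring R] (z : R)

@[simp]
lemma qbinom_zero_right (n : ℕ) : qbinom z n 0 = 1 := by cases n <;> rfl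

@[simp]
lemma qbinom_zero_succ (B : ℕ) : qbinom z 0 (B + 1) = 0 := rfl

lemma qbinom_succ_succ (n B : ℕ) :
    qbinom z (n + 1) (B + 1) = qbinom z n B + z ^ (B + 1) * qbinom z n (B + 1) := rfl

lemma qbinom_eq_zero_of_lt : ∀ {n B : ℕ}, n < B → qbinom z n B = 0
  | 0, _ + 1, _ => rfl
  | n + 1, B + 1, h => by
    rw [qbinom_succ_succ, qbinom_eq_zero_of_lt (by omega), qbinom_eq_zero_of_lt (by omega),
      mul_zero, add_zero]

lemma map_qbinom {S F : Type*} [Semiring S] [FunLike F R S] [RingHomClass F R S] (f : F) :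
    ∀ n B : ℕ, f (qbinom z n B) = qbinom (f z) n B
  | _, 0 => by simp
  | 0, _ + 1 => by simp
  | n + 1, B + 1 => by
    simp only [qbinom_succ_succ, map_add, map_mul, map_pow, map_qbinom f n]

end Semiring

def qfac [CommRing R] (z : R) (n : ℕ) : R := ∏ i ∈ range n, (1 - z ^ (i + 1))

lemma qfac_succ [CommRing R] (z : R) (n : ℕ) : qfac z (n + 1) = qfac z n * (1 - z ^ (n + 1)) :=
  prod_range_succ _ n

lemma qbinom_mul_qfac_mul_qfac [CommRing R] (z : R) :
    ∀ {n B : ℕ}, B ≤ n → qbinom z n B * (qfac z B * qfac z (n - B)) = qfac z n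
  | n, 0, _ => by simp [qfac]
  | 0, _ + 1, h => absurd h (by omega)
  | n + 1, B + 1, h => by
    have ih := qbinom_mul_qfac_mul_qfac z (n := n) (B := B) (by omega)
    rw [qbinom_succ_succ, Nat.add_sub_add_right, qfac_succ, qfac_succ z n, ← ih]
    rcases Nat.lt_or_ge B n with hB | hB
    · obtain ⟨r, rfl⟩ := Nat.exists_eq_add_of_lt hB
      have ih' := qbinom_mul_qfac_mul_qfac z (n := B + r + 1) (B := B + 1) (by omega)
      rw [show B + r + 1 - (B + 1) = r by omega, ← ih, show B + r + 1 - B = r + 1 by omega,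
        qfac_succ z r, qfac_succ z B] at ih'
      rw [show B + r + 1 - B = r + 1 by omega, qfac_succ z r]
      linear_combination (z ^ (B + 1) * (1 - z ^ (r + 1))) * ih'
    · obtain rfl : B = n := by omega
      simp only [qbinom_eq_zero_of_lt z (Nat.lt_succ_self B), mul_zero, add_zero, Nat.sub_self]
      ring

end QBinomial

lemma qpoch_eq_qfac (t n : ℕ) : qpoch t n = qfac (Polynomial.X ^ t) n := by
  simp only [qpoch, qfac, ← pow_mul]

lemma qfac_X_pow_ne_zero {t : ℕ} (ht : 0 < t) (n : ℕ) :
    qfac (Polynomial.X ^ t : Polynomial ℚ) n ≠ 0 := by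
  refine prod_ne_zero_iff.2 fun i _ h => ?_
  have := congrArg (Polynomial.coeff · 0) h
  simp [← pow_mul, Polynomial.coeff_X_pow, ht.ne'] at this

lemma gauss_natCast {t : ℕ} (ht : 0 < t) (n B : ℕ) :
    gauss t n B = qbinom (Polynomial.X ^ t) n B := by
  rcases le_or_gt B n with hB | hB
  · rw [gauss, if_pos (by omega), Int.toNat_natCast, Int.toNat_natCast,
      show ((n : ℤ) - B).toNat = n - B by omega, qpoch_eq_qfac, qpoch_eq_qfac, qpoch_eq_qfac,
      ← qbinom_mul_qfac_mul_qfac _ hB]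
    exact mul_div_cancel_right₀ _
      (mul_ne_zero (qfac_X_pow_ne_zero ht B) (qfac_X_pow_ne_zero ht (n - B)))
  · rw [gauss, if_neg (by omega), qbinom_eq_zero_of_lt _ hB]

lemma gauss_eq_zero_of_lt (t : ℕ) {A B : ℤ} (h : A < B) : gauss t A B = 0 :=
  if_neg (by omega)

lemma pq_gauss_natCast {t : ℕ} (ht : 0 < t) (n B : ℕ) :
    pq (gauss t n B) = qbinom ((X 2 : S3) ^ t) n B := by
  rw [gauss_natCast ht, pq, map_qbinom, map_pow, Polynomial.aeval_X]

section ClosedForms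

variable {R : Type*} [CommSemiring R] (x y z : R)

/- The term `p` counts partitions with `p.1` parts `≡ a` and `p.2 + 1` parts `≡ b`, with
`x, y, z` standing for `μ q^a, ν q^b, q^k`; `closedFormA` is the companion formula for the
largest part `k(h+1) + a`. -/
def closedFormB (n h : ℕ) : R :=
  ∑ p ∈ antidiagonal n,
    x ^ p.1 * y ^ (p.2 + 1) * z ^ (h * (h + 1)) * qbinom z p.2 h * qbinom z p.1 h

def closedFormA (n h : ℕ) : R :=
  ∑ p ∈ antidiagonal n,
    x ^ p.1 * y ^ (p.2 + 1) * z ^ ((h + 1) ^ 2) * qbinom z p.2 h * qbinom z p.1 (h + 1)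

lemma closedFormB_zero (h : ℕ) : closedFormB x y z 0 h = if h = 0 then y else 0 := by
  cases h <;> simp [closedFormB]

lemma closedFormA_zero (h : ℕ) : closedFormA x y z 0 h = 0 := by
  simp [closedFormA]

lemma closedFormB_succ_zero (n : ℕ) :
    closedFormB x y z (n + 1) 0 = y * (closedFormB x y z n 0 + x ^ (n + 1)) := by
  simp only [closedFormB, Nat.sum_antidiagonal_succ', qbinom_zero_right, mul_add, mul_sum]
  rw [add_comm]
  congr 1
  · exact sum_congr rfl fun p _ => by ring
  · ring

lemma closedFormB_succ_succ (n h : ℕ) :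
    closedFormB x y z (n + 1) (h + 1) =
      y * z ^ (h + 1) * (closedFormB x y z n (h + 1) + closedFormA x y z n h) := by
  simp only [closedFormB, closedFormA, Nat.sum_antidiagonal_succ', qbinom_zero_succ, mul_zero,
    zero_mul, zero_add, qbinom_succ_succ, ← sum_add_distrib, mul_sum]
  exact sum_congr rfl fun p _ => by ring

lemma closedFormA_succ (n h : ℕ) :
    closedFormA x y z (n + 1) h =
      x * z ^ (h + 1) * (closedFormA x y z n h + closedFormB x y z n h) := by
  simp only [closedFormB, closedFormA, Nat.sum_antidiagonal_succ, qbinom_zero_succ, mul_zero,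
    zero_add, qbinom_succ_succ, ← sum_add_distrib, mul_sum]
  exact sum_congr rfl fun p _ => by ring

end ClosedForms

section Partitions

variable {a b k : ℕ}

def weight (a b k : ℕ) (l : List ℕ) : S3 :=
  (X 0 : S3) ^ (l.filter (fun x => x % k = a % k)).length *
    (X 1 : S3) ^ (l.filter (fun x => x % k = b % k)).length * (X 2 : S3) ^ l.sum

lemma weight_cons (x : ℕ) (l : List ℕ) :
    weight a b k (x :: l) = weight a b k [x] * weight a b k l := by
  simp only [weight, List.filter_cons, List.sum_cons, List.filter_nil, List.sum_nil]
  split_ifs <;> simp only [List.length_cons, List.length_nil] <;> ring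

lemma weight_singleton_of_mod_a (hab : a % k ≠ b % k) {x : ℕ} (hx : x % k = a % k) :
    weight a b k [x] = X 0 * X 2 ^ x := by
  simp [weight, hx, hab]

lemma weight_singleton_of_mod_b (hab : a % k ≠ b % k) {x : ℕ} (hx : x % k = b % k) :
    weight a b k [x] = X 1 * X 2 ^ x := by
  simp [weight, hx, Ne.symm hab]

lemma finite_setOf_length_eq_forall_le (m N : ℕ) :
    {l : List ℕ | l.length = m ∧ ∀ x ∈ l, x ≤ N}.Finite := by
  refine ((List.finite_length_eq (Fin (N + 1)) m).image (List.map Fin.val)).subset ?_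
  rintro l ⟨hlen, hle⟩
  lift l to List (Fin (N + 1)) using fun x hx => Nat.lt_succ_of_le (hle x hx)
  exact ⟨l, by simpa using hlen, rfl⟩

lemma isBabk_cons_cons_iff {m x y : ℕ} {t : List ℕ} :
    IsBabk a b k (m + 1) (x :: y :: t) ↔
      (x % k = a % k ∨ x % k = b % k) ∧ y ≤ x ∧ x < y + k ∧ IsBabk a b k m (y :: t) := by
  simp only [IsBabk, List.length_cons, Nat.add_right_cancel_iff, List.pairwise_cons,
    List.mem_cons, forall_eq_or_imp, List.getLast?_cons_cons]
  constructor
  · rintro ⟨hlen, ⟨⟨hxy, -⟩, hyt, hsort⟩, ⟨hx, hy, hres⟩, hlast, hchain⟩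
    obtain ⟨hxy', hchain⟩ := List.isChain_cons_cons.1 hchain
    exact ⟨hx, hxy, hxy', hlen, ⟨hyt, hsort⟩, ⟨hy, hres⟩, hlast, hchain⟩
  · rintro ⟨hx, hxy, hxy', hlen, ⟨hyt, hsort⟩, ⟨hy, hres⟩, hlast, hchain⟩
    exact ⟨hlen, ⟨⟨hxy, fun z hz => (hyt z hz).trans hxy⟩, hyt, hsort⟩, ⟨hx, hy, hres⟩, hlast,
      List.isChain_cons_cons.2 ⟨hxy', hchain⟩⟩

lemma IsBabk.le_head (hab : a ≤ b) {m y : ℕ} {t : List ℕ} (hl : IsBabk a b k m (y :: t)) :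
    a ≤ y := by
  obtain ⟨-, hsort, -, hlast, -⟩ := hl
  have hlast_le : ∀ g, (y :: t).getLast? = some g → g ≤ y := fun g hg => by
    rcases List.mem_cons.1 (List.mem_of_getLast? hg) with rfl | hgt
    · exact le_rfl
    · exact List.rel_of_pairwise_cons hsort hgt
  rcases hlast with h | h
  · exact hlast_le a h
  · exact hab.trans (hlast_le b h)

lemma finite_babk (a b k m lp : ℕ) :
    {l : List ℕ | IsBabk a b k m l ∧ l.head? = some lp}.Finite := by
  refine (finite_setOf_length_eq_forall_le m lp).subset ?_
  rintro l ⟨⟨hlen, hsort, -⟩, hhead⟩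
  obtain ⟨t, rfl⟩ := List.head?_eq_some_iff.1 hhead
  refine ⟨hlen, fun y hy => ?_⟩
  rcases List.mem_cons.1 hy with rfl | hy
  · exact le_rfl
  · exact List.rel_of_pairwise_cons hsort hy

def babk (a b k m lp : ℕ) : Finset (List ℕ) := (finite_babk a b k m lp).toFinset

lemma mem_babk {m lp : ℕ} {l : List ℕ} :
    l ∈ babk a b k m lp ↔ IsBabk a b k m l ∧ l.head? = some lp :=
  Set.Finite.mem_toFinset _

lemma gab_eq_sum_babk (m lp : ℕ) : gab a b k m lp = ∑ l ∈ babk a b k m lp, weight a b k l := by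
  rw [gab, ← Finset.tsum_subtype]
  exact (Equiv.subtypeEquivRight fun l => mem_babk.symm).tsum_eq fun l => weight a b k l.1

lemma gab_eq_zero (hab : a ≤ b) {m y : ℕ} (hy : ¬(a ≤ y ∧ (y % k = a % k ∨ y % k = b % k))) :
    gab a b k m y = 0 := by
  refine (gab_eq_sum_babk m y).trans (sum_eq_zero fun l hl => absurd ?_ hy)
  obtain ⟨hl, hhead⟩ := mem_babk.1 hl
  obtain ⟨t, rfl⟩ := List.head?_eq_some_iff.1 hhead
  exact ⟨hl.le_head hab, hl.2.2.1 y List.mem_cons_self⟩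

lemma babk_succ {m x : ℕ} (hm : 1 ≤ m) (hx : x % k = a % k ∨ x % k = b % k) :
    babk a b k (m + 1) x =
      (Icc (x + 1 - k) x).biUnion fun y =>
        (babk a b k m y).map ⟨List.cons x, List.cons_injective⟩ := by
  ext l
  simp only [mem_biUnion, mem_map, mem_Icc, mem_babk, Function.Embedding.coeFn_mk]
  constructor
  · rintro ⟨hl, hhead⟩
    obtain ⟨_ | ⟨y, t⟩, rfl⟩ := List.head?_eq_some_iff.1 hhead
    · exact absurd hl.1 (by rw [List.length_singleton]; omega)
    · obtain ⟨-, hyx, hxy, ht⟩ := isBabk_cons_cons_iff.1 hl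
      exact ⟨y, ⟨by omega, hyx⟩, y :: t, ⟨ht, rfl⟩, rfl⟩
  · rintro ⟨y, ⟨hy1, hy2⟩, t', ⟨ht, hhead⟩, rfl⟩
    obtain ⟨t, rfl⟩ := List.head?_eq_some_iff.1 hhead
    exact ⟨isBabk_cons_cons_iff.2 ⟨hx, hy2, by omega, ht⟩, rfl⟩

lemma gab_succ {m x : ℕ} (hm : 1 ≤ m) (hx : x % k = a % k ∨ x % k = b % k) :
    gab a b k (m + 1) x = weight a b k [x] * ∑ y ∈ Icc (x + 1 - k) x, gab a b k m y := by
  simp only [gab_eq_sum_babk, babk_succ hm hx, mul_sum]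
  rw [sum_biUnion]
  · exact sum_congr rfl fun y _ => by
      rw [sum_map]
      exact sum_congr rfl fun l _ => weight_cons x l
  · intro y₁ _ y₂ _ hne
    refine disjoint_left.2 fun l h₁ h₂ => hne ?_
    simp only [mem_map, mem_babk, Function.Embedding.coeFn_mk] at h₁ h₂
    obtain ⟨t₁, ⟨-, h₁⟩, rfl⟩ := h₁
    obtain ⟨t₂, ⟨-, h₂⟩, ht⟩ := h₂
    rw [List.cons_injective ht, h₁] at h₂
    exact Option.some_injective _ h₂

lemma eq_of_modEq_of_mem_Icc {k x y y' : ℕ} (hy : y ∈ Icc (x + 1 - k) x)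
    (hy' : y' ∈ Icc (x + 1 - k) x) (h : y ≡ y' [MOD k]) : y = y' := by
  rw [mem_Icc] at hy hy'
  exact h.eq_of_abs_lt (abs_sub_lt_iff.2 (by omega))

lemma gab_succ_eq_sum_of_subset (hab : a ≤ b) {m x : ℕ} (hm : 1 ≤ m)
    (hx : x % k = a % k ∨ x % k = b % k) {T : Finset ℕ} (hT : T ⊆ Icc (x + 1 - k) x)
    (hvalid : ∀ y ∈ Icc (x + 1 - k) x, a ≤ y → (y % k = a % k ∨ y % k = b % k) → y ∈ T) :
    gab a b k (m + 1) x = weight a b k [x] * ∑ y ∈ T, gab a b k m y := by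
  rw [gab_succ hm hx, sum_subset hT fun y hy hyT => gab_eq_zero hab ?_]
  exact fun ⟨hay, hres⟩ => hyT (hvalid y hy hay hres)

lemma mem_babk_one {lp : ℕ} {l : List ℕ} :
    l ∈ babk a b k 1 lp ↔ l = [lp] ∧ (lp = a ∨ lp = b) := by
  rw [mem_babk]
  constructor
  · rintro ⟨⟨hlen, -, -, hlast, -⟩, hhead⟩
    obtain ⟨t, rfl⟩ := List.head?_eq_some_iff.1 hhead
    obtain rfl : t = [] := List.length_eq_zero_iff.1 (by simpa using hlen)
    simpa using hlast
  · rintro ⟨rfl, h⟩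
    refine ⟨⟨rfl, List.pairwise_singleton _ _, ?_, by simpa using h, List.isChain_singleton _⟩, rfl⟩
    rintro x hx
    rw [List.mem_singleton.1 hx]
    rcases h with rfl | rfl <;> simp

lemma gab_one (lp : ℕ) :
    gab a b k 1 lp = if lp = a ∨ lp = b then weight a b k [lp] else 0 := by
  rw [gab_eq_sum_babk]
  split_ifs with h
  · rw [show babk a b k 1 lp = {[lp]} by ext; simp [mem_babk_one, h], sum_singleton]
  · rw [show babk a b k 1 lp = ∅ by ext; simp [mem_babk_one, h], sum_empty]

end Partitions

section Recursions

variable {a b k : ℕ}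

lemma mod_ne_mod (ha : 1 ≤ a) (hab : a < b) (hbk : b ≤ k) : a % k ≠ b % k := by
  rw [Nat.mod_eq_of_lt (by omega : a < k)]
  rcases hbk.lt_or_eq with hbk | rfl
  · rw [Nat.mod_eq_of_lt hbk]
    omega
  · rw [Nat.mod_self]
    omega

lemma gab_succ_largest_b (ha : 1 ≤ a) (hab : a < b) (hbk : b ≤ k) {m : ℕ} (hm : 1 ≤ m)
    (h : ℕ) :
    gab a b k (m + 1) (k * h + b) =
      X 1 * X 2 ^ b * (X 2 ^ k) ^ h * (gab a b k m (k * h + b) + gab a b k m (k * h + a)) := by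
  have hb : (k * h + b) % k = b % k := Nat.mul_add_mod k h b
  have ha' : (k * h + a) % k = a % k := Nat.mul_add_mod k h a
  have hwin : k * h + a ∈ Icc (k * h + b + 1 - k) (k * h + b) := mem_Icc.2 ⟨by omega, by omega⟩
  rw [gab_succ_eq_sum_of_subset hab.le hm (Or.inr hb) (T := {k * h + b, k * h + a}),
    sum_pair (by omega), weight_singleton_of_mod_b (mod_ne_mod ha hab hbk) hb]
  · ring
  · exact insert_subset_iff.2 ⟨mem_Icc.2 ⟨by omega, le_rfl⟩, singleton_subset_iff.2 hwin⟩
  · rintro y hy - (hy' | hy')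
    · exact mem_insert_of_mem (mem_singleton.2
        (eq_of_modEq_of_mem_Icc hy hwin (hy'.trans ha'.symm)))
    · exact mem_insert.2 (Or.inl (eq_of_modEq_of_mem_Icc hy
        (mem_Icc.2 ⟨by omega, le_rfl⟩) (hy'.trans hb.symm)))

lemma gab_succ_largest_a_succ (ha : 1 ≤ a) (hab : a < b) (hbk : b ≤ k) {m : ℕ} (hm : 1 ≤ m)
    (h : ℕ) :
    gab a b k (m + 1) (k * (h + 1) + a) =
      X 0 * X 2 ^ a * (X 2 ^ k) ^ (h + 1) *
        (gab a b k m (k * (h + 1) + a) + gab a b k m (k * h + b)) := by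
  have ha' : (k * (h + 1) + a) % k = a % k := Nat.mul_add_mod k (h + 1) a
  have hb : (k * h + b) % k = b % k := Nat.mul_add_mod k h b
  have hkh : k * (h + 1) = k * h + k := Nat.mul_succ k h
  have hwin : k * h + b ∈ Icc (k * (h + 1) + a + 1 - k) (k * (h + 1) + a) :=
    mem_Icc.2 ⟨by omega, by omega⟩
  rw [gab_succ_eq_sum_of_subset hab.le hm (Or.inl ha') (T := {k * (h + 1) + a, k * h + b}),
    sum_pair (by omega), weight_singleton_of_mod_a (mod_ne_mod ha hab hbk) ha']
  · ring
  · exact insert_subset_iff.2 ⟨mem_Icc.2 ⟨by omega, le_rfl⟩, singleton_subset_iff.2 hwin⟩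
  · rintro y hy - (hy' | hy')
    · exact mem_insert.2 (Or.inl (eq_of_modEq_of_mem_Icc hy
        (mem_Icc.2 ⟨by omega, le_rfl⟩) (hy'.trans ha'.symm)))
    · exact mem_insert_of_mem (mem_singleton.2
        (eq_of_modEq_of_mem_Icc hy hwin (hy'.trans hb.symm)))

lemma gab_largest_a (ha : 1 ≤ a) (hab : a < b) (hbk : b ≤ k) {m : ℕ} (hm : 1 ≤ m) :
    gab a b k m a = (X 0 * X 2 ^ a) ^ m := by
  have hmod := mod_ne_mod ha hab hbk
  induction m, hm using Nat.le_induction with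
  | base => rw [gab_one, if_pos (Or.inl rfl), weight_singleton_of_mod_a hmod rfl, pow_one]
  | succ m hm ih =>
    rw [gab_succ_eq_sum_of_subset hab.le hm (Or.inl rfl) (T := {a}), sum_singleton,
      weight_singleton_of_mod_a hmod rfl, ih, pow_succ']
    · exact singleton_subset_iff.2 (mem_Icc.2 ⟨by omega, le_rfl⟩)
    · intro y hy hay _
      exact mem_singleton.2 (le_antisymm (mem_Icc.1 hy).2 hay)

theorem gab_eq_closedForm (ha : 1 ≤ a) (hab : a < b) (hbk : b ≤ k) (n : ℕ) :
    ∀ h, gab a b k (n + 1) (k * h + b) =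
        closedFormB (X 0 * X 2 ^ a) (X 1 * X 2 ^ b) (X 2 ^ k) n h ∧
      gab a b k (n + 1) (k * (h + 1) + a) =
        closedFormA (X 0 * X 2 ^ a) (X 1 * X 2 ^ b) (X 2 ^ k) n h := by
  have hmod := mod_ne_mod ha hab hbk
  induction n with
  | zero =>
    intro h
    have hk : ∀ j, k ≤ k * (j + 1) := fun j => Nat.le_mul_of_pos_right k j.succ_pos
    rw [gab_one, gab_one, closedFormB_zero, closedFormA_zero,
      if_neg (show ¬(k * (h + 1) + a = a ∨ k * (h + 1) + a = b) by have := hk h; omega)]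
    refine ⟨?_, rfl⟩
    rcases h with _ | h
    · rw [mul_zero, zero_add, if_pos (Or.inr rfl), if_pos rfl, weight_singleton_of_mod_b hmod rfl]
    · rw [if_neg (by have := hk h; omega), if_neg h.succ_ne_zero]
  | succ n ih =>
    intro h
    have hn : 1 ≤ n + 1 := by omega
    refine ⟨?_, ?_⟩
    · rw [gab_succ_largest_b ha hab hbk hn]
      rcases h with _ | h
      · rw [(ih 0).1, mul_zero, zero_add, gab_largest_a ha hab hbk hn,
          closedFormB_succ_zero]
        ring
      · rw [(ih (h + 1)).1, (ih h).2, closedFormB_succ_succ]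
    · rw [gab_succ_largest_a_succ ha hab hbk hn, (ih h).1, (ih h).2, closedFormA_succ]

end Recursions

lemma closedFormB_eq_tsum {a b k : ℕ} (hab : a ≤ b) (hk : 0 < k) (n h : ℕ) :
    closedFormB (X 0 * X 2 ^ a) (X 1 * X 2 ^ b) (X 2 ^ k) n h =
      ∑' i : ℕ,
        (X 0 : S3) ^ (((n + 1 : ℕ) : ℤ) - h - i - 1).toNat * (X 1 : S3) ^ (h + i + 1) *
          (X 2 : S3) ^ ((n + 1) * a + k * h ^ 2 + k * h + (b - a) * (h + i + 1)) *
            pq (gauss k ((h : ℤ) + i) h) *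
              pq (gauss k (((n + 1 : ℕ) : ℤ) - h - i - 1) h) := by
  set F : ℕ × ℕ → S3 := fun p => (X 0 * X 2 ^ a) ^ p.1 * (X 1 * X 2 ^ b) ^ (p.2 + 1) *
    (X 2 ^ k) ^ (h * (h + 1)) * qbinom (X 2 ^ k) p.2 h * qbinom (X 2 ^ k) p.1 h
  rw [tsum_eq_sum (s := range (n + 1 - h)) fun i hi => ?vanish]
  case vanish =>
    rw [gauss_eq_zero_of_lt k (A := ((n + 1 : ℕ) : ℤ) - h - i - 1) (B := h) (by simp at hi; omega)]
    simp [pq]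
  calc closedFormB (X 0 * X 2 ^ a) (X 1 * X 2 ^ b) (X 2 ^ k) n h
      = ∑ p ∈ antidiagonal n, F p.swap := by rw [closedFormB, Nat.sum_antidiagonal_swap]
    _ = ∑ j ∈ range (n + 1), F (n - j, j) := Nat.sum_antidiagonal_eq_sum_range_succ_mk _ n
    _ = ∑ j ∈ Ico h (n + 1), F (n - j, j) := by
      refine (sum_subset (fun j hj => mem_range.2 (mem_Ico.1 hj).2) fun j hjn hj => ?_).symm
      simp only [F]
      rw [qbinom_eq_zero_of_lt _ (by simp at hjn hj; omega : j < h), mul_zero, zero_mul]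
    _ = ∑ i ∈ range (n + 1 - h), F (n - (h + i), h + i) := sum_Ico_eq_sum_range _ _ _
    _ = _ := sum_congr rfl fun i hi => ?_
  obtain ⟨r, rfl⟩ := Nat.exists_eq_add_of_le (show h + i ≤ n by simp at hi; omega)
  obtain ⟨c, rfl⟩ := Nat.exists_eq_add_of_le hab
  rw [show ((h : ℤ) + i) = ((h + i : ℕ) : ℤ) by push_cast; ring,
    show ((h + i + r + 1 : ℕ) : ℤ) - h - i - 1 = (r : ℤ) by push_cast; ring,
    pq_gauss_natCast hk, pq_gauss_natCast hk, Int.toNat_natCast, Nat.add_sub_cancel_left,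
    Nat.add_sub_cancel_left]
  ring

open MvPowerSeries in
/-- for m ≥ 1 and h ≥ 0, the generating function for partitions
in B_{a,b,k}(m) with largest part kh+b equals
∑_{i≥0} μ^{m-h-i-1} ν^{h+i+1} q^{ma+kh²+kh+(b-a)(h+i+1)} [h+i, h]_{q^k}
[m-h-i-1, h]_{q^k}. -/
theorem stmt6 (a b k m h : ℕ) (ha : 1 ≤ a) (hab : a < b) (hbk : b ≤ k)
    (hm : 1 ≤ m) :
    gab a b k m (k * h + b) =
      ∑' i : ℕ,
        (X 0 : S3) ^ ((m : ℤ) - h - i - 1).toNat * (X 1 : S3) ^ (h + i + 1) *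
          (X 2 : S3) ^ (m * a + k * h ^ 2 + k * h + (b - a) * (h + i + 1)) *
            pq (gauss k ((h : ℤ) + i) h) *
              pq (gauss k ((m : ℤ) - h - i - 1) h) := by
  obtain ⟨n, rfl⟩ := Nat.exists_eq_add_of_le' hm
  rw [(gab_eq_closedForm ha hab hbk n h).1, closedFormB_eq_tsum hab.le (by omega) n h]
end
end

section
/- For m ≥ 1 and either (j=1 and 1 ≤ s ≤ r) or (j ≥ 2 and -k+r+1 ≤ s ≤ r), the generating function for overpartitions in B_{k,r}(m) with largest part equal to the non-overlined part k(j-1)+s is q^{m - j + k·binom(j,2) + r(j-1) + s} · [m - j + k(j-1) + s - 1 choose k(j-1) + s - 1]_q. -/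
/-!
Deleting the largest part λ₁ of an overpartition in B_{k,r}(m+1) leaves one in B_{k,r}(m) whose
largest part can follow λ₁, so g(m+1, λ₁) = q^{λ₁} Σ g(m, μ) over those μ. Split the
non-overlined parts into blocks k(j-2)+r < a ≤ k(j-1)+r. Inside a block, the parts that can follow
a+1 are those that can follow a together with a+1 itself; the first part of block j ≥ 2 can be
followed only by itself and by the overlined k(j-2)+r, whose generating function equals that of
its non-overlined copy. Both recursions are instances of q-Pascal's rule for the claimed closed
form, so the theorem follows by induction on m and, inside a block, on a.
-/

noncomputable section

/-- Linear order on (possibly overlined) parts: 1 < 1̄ < 2 < 2̄ < ⋯ ;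
ord (a, false) = 2a, ord (a, true) = 2a + 1. -/
def ord (p : ℕ × Bool) : ℕ := 2 * p.1 + (if p.2 then 1 else 0)

/-- An overpartition as a non-increasing list of (value, overlined?) pairs:
parts positive, non-increasing in the above order (so an overlined part comes
before the equal non-overlined parts), and each value overlined at most once. -/
def IsOverList (l : List (ℕ × Bool)) : Prop :=
  (∀ p ∈ l, 0 < p.1) ∧ l.Pairwise (fun p q => ord q ≤ ord p) ∧
    ∀ a : ℕ, l.count (a, true) ≤ 1

/-- Number of overlined parts of an overpartition list. -/
def olL (l : List (ℕ × Bool)) : ℕ := (l.filter (fun p => p.2 = true)).length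

/-- Weight of an overpartition list. -/
def wtL (l : List (ℕ × Bool)) : ℕ := (l.map Prod.fst).sum
/-- The basis set B_{k,r}(m): overpartitions with m parts, only parts ≡ r
(mod k) overlined, last part ≤ r̄, and for consecutive parts: whenever
λ_{i+1} ≤ kj + r (in the order 1 < 1̄ < 2 < 2̄ < ⋯, for any j ≥ 0) one has
λ_i ≤ overline(kj + r).  (For the unique j ≥ 1 with
overline(k(j-1)+r) ≤ λ_{i+1} ≤ kj+r this is the binding condition
λ_i ≤ overline(kj+r); the conditions for larger j are implied, and the j = 0
case handles λ_{i+1} ≤ r.) -/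
def IsBkr (k r m : ℕ) (l : List (ℕ × Bool)) : Prop :=
  l.length = m ∧ IsOverList l ∧ (∀ p ∈ l, p.2 = true → p.1 % k = r % k) ∧
    (∀ p, l.getLast? = some p → ord p ≤ 2 * r + 1) ∧
    l.Chain' (fun p q => ∀ j : ℕ, ord q ≤ 2 * (k * j + r) → ord p ≤ 2 * (k * j + r) + 1)
open MvPowerSeries in
/-- g_{k,r}(m, p): the weight generating function (q = X 2) for overpartitions
in B_{k,r}(m) with largest part p (a pair (value, overlined?)). -/
def gkr (k r m : ℕ) (p : ℕ × Bool) : S3 :=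
  ∑' l : {l : List (ℕ × Bool) // IsBkr k r m l ∧ l.head? = some p},
    (X 2 : S3) ^ wtL l.1


open Polynomial

def qBinom : ℕ → ℕ → Polynomial ℚ
  | _, 0 => 1
  | 0, _ + 1 => 0
  | n + 1, b + 1 => qBinom n b + X ^ (b + 1) * qBinom n (b + 1)

@[simp]
theorem qBinom_zero_right (n : ℕ) : qBinom n 0 = 1 := by
  cases n <;> rfl

theorem qBinom_succ_succ (n b : ℕ) :
    qBinom (n + 1) (b + 1) = qBinom n b + X ^ (b + 1) * qBinom n (b + 1) :=
  rfl

theorem qBinom_eq_zero_of_lt {n b : ℕ} (h : n < b) : qBinom n b = 0 := by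
  induction n generalizing b with
  | zero => obtain ⟨b, rfl⟩ := Nat.exists_eq_add_one_of_ne_zero (by omega : b ≠ 0); rfl
  | succ n ih =>
    obtain ⟨b, rfl⟩ := Nat.exists_eq_add_one_of_ne_zero (by omega : b ≠ 0)
    rw [qBinom_succ_succ, ih (by omega), ih (by omega), mul_zero, add_zero]

@[simp]
theorem qBinom_self (n : ℕ) : qBinom n n = 1 := by
  induction n with
  | zero => rfl
  | succ n ih =>
    rw [qBinom_succ_succ, ih, qBinom_eq_zero_of_lt n.lt_succ_self, mul_zero, add_zero]

theorem qpoch_one_succ (n : ℕ) : qpoch 1 (n + 1) = qpoch 1 n * (1 - X ^ (n + 1)) := by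
  rw [qpoch, Finset.prod_range_succ, one_mul]
  rfl

theorem qpoch_one_ne_zero (n : ℕ) : qpoch 1 n ≠ 0 := by
  refine Finset.prod_ne_zero_iff.mpr fun i _ h => ?_
  simpa using congrArg (eval 0) h

theorem qBinom_mul_qpoch {n b : ℕ} (h : b ≤ n) :
    qBinom n b * (qpoch 1 b * qpoch 1 (n - b)) = qpoch 1 n := by
  induction n generalizing b with
  | zero =>
    obtain rfl : b = 0 := by omega
    simp [qpoch]
  | succ n ih =>
    rcases b with _ | b
    · simp [qpoch]
    obtain rfl | hlt : b = n ∨ b < n := by omega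
    · simp [qpoch]
    have hsub : qpoch 1 (n - b) = qpoch 1 (n - (b + 1)) * (1 - X ^ (n - b)) := by
      rw [show n - b = n - (b + 1) + 1 by omega, qpoch_one_succ]
    have hX : (X : Polynomial ℚ) ^ (b + 1) * X ^ (n - b) = X ^ (n + 1) := by
      rw [← pow_add]; congr 1; omega
    rw [qBinom_succ_succ, Nat.add_sub_add_right]
    linear_combination (1 - X ^ (b + 1)) * ih (b := b) (by omega) +
      (X ^ (b + 1) * (1 - X ^ (n - b))) * ih (b := b + 1) (by omega) +
      qBinom n b * qpoch 1 (n - b) * qpoch_one_succ b +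
      X ^ (b + 1) * qBinom n (b + 1) * qpoch 1 (b + 1) * hsub -
      qpoch_one_succ n - qpoch 1 n * hX

theorem gauss_one_natCast (n b : ℕ) : gauss 1 n b = qBinom n b := by
  rcases le_or_gt b n with h | h
  · rw [gauss, if_pos (by omega), ← Nat.cast_sub h]
    simp only [Int.toNat_natCast]
    rw [← qBinom_mul_qpoch h, mul_div_cancel_right₀ _
      (mul_ne_zero (qpoch_one_ne_zero _) (qpoch_one_ne_zero _))]
  · rw [gauss, if_neg (by omega), qBinom_eq_zero_of_lt h]

@[simp] theorem ord_false (a : ℕ) : ord (a, false) = 2 * a := by simp [ord]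

@[simp] theorem ord_true (a : ℕ) : ord (a, true) = 2 * a + 1 := by simp [ord]

theorem ord_injective : Function.Injective ord := by
  rintro ⟨a, _ | _⟩ ⟨b, _ | _⟩ h <;> simp only [ord_false, ord_true] at h <;> simp <;> omega

theorem fst_le_of_ord_le {p q : ℕ × Bool} (h : ord p ≤ ord q) : p.1 ≤ q.1 := by
  obtain ⟨a, _ | _⟩ := p <;> obtain ⟨b, _ | _⟩ := q <;>
    simp only [ord_false, ord_true] at h <;> simp <;> omega

def IsPart (k r : ℕ) (p : ℕ × Bool) : Prop :=
  0 < p.1 ∧ (p.2 = true → p.1 % k = r % k)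

instance (k r : ℕ) : DecidablePred (IsPart k r) :=
  fun _ => inferInstanceAs (Decidable (_ ∧ _))

def CanFollow (k r : ℕ) (p q : ℕ × Bool) : Prop :=
  IsPart k r q ∧ ord q ≤ ord p ∧ ¬(p.2 = true ∧ q = p) ∧
    ∀ j : ℕ, ord q ≤ 2 * (k * j + r) → ord p ≤ 2 * (k * j + r) + 1

open scoped Classical in
def nextParts (k r : ℕ) (p : ℕ × Bool) : Finset (ℕ × Bool) :=
  (Finset.range (p.1 + 1) ×ˢ Finset.univ).filter (CanFollow k r p)

theorem mem_nextParts {k r : ℕ} {p q : ℕ × Bool} :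
    q ∈ nextParts k r p ↔ CanFollow k r p q := by
  classical
  rw [nextParts, Finset.mem_filter, Finset.mem_product, Finset.mem_range]
  exact ⟨And.right, fun h =>
    ⟨⟨Nat.lt_succ_of_le (fst_le_of_ord_le h.2.1), Finset.mem_univ _⟩, h⟩⟩

theorem isOverList_cons_cons {p q : ℕ × Bool} {t : List (ℕ × Bool)} :
    IsOverList (p :: q :: t) ↔
      0 < p.1 ∧ ord q ≤ ord p ∧ ¬(p.2 = true ∧ q = p) ∧ IsOverList (q :: t) := by
  have : IsTrans (ℕ × Bool) (fun p q => ord q ≤ ord p) := ⟨fun _ _ _ h₁ h₂ => h₂.trans h₁⟩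
  simp only [IsOverList, List.forall_mem_cons, List.pairwise_cons_cons_iff_of_trans]
  constructor
  · rintro ⟨⟨hp, hpos⟩, ⟨hqp, hsorted⟩, hcount⟩
    refine ⟨hp, hqp, ?_, hpos, hsorted,
      fun a => List.count_le_count_cons.trans (hcount a)⟩
    rintro ⟨hp2, rfl⟩
    have := hcount q.1
    rw [← hp2, List.count_cons_self, List.count_cons_self] at this
    omega
  · rintro ⟨hp, hqp, hdup, hpos, hsorted, hcount⟩
    refine ⟨⟨hp, hpos⟩, ⟨hqp, hsorted⟩, fun a => ?_⟩
    by_cases hpa : p = (a, true)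
    · subst hpa
      have hnot : (a, true) ∉ q :: t := by
        intro hmem
        have hle : ord (a, true) ≤ ord q := by
          rcases List.mem_cons.mp hmem with h | h
          · exact (congrArg ord h).le
          · exact (List.pairwise_cons.mp hsorted).1 _ h
        exact hdup ⟨rfl, ord_injective (le_antisymm hqp hle)⟩
      simp [List.count_cons_self, List.count_eq_zero_of_not_mem hnot]
    · simpa [List.count_cons, hpa] using hcount a

theorem isBkr_singleton {k r : ℕ} {p : ℕ × Bool} :
    IsBkr k r 1 [p] ↔ IsPart k r p ∧ ord p ≤ 2 * r + 1 := by
  simp only [IsBkr, IsOverList, IsPart, List.length_singleton, List.mem_singleton, forall_eq,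
    List.pairwise_singleton, List.count_singleton, List.getLast?_singleton, Option.some.injEq,
    forall_eq']
  exact ⟨fun h => ⟨⟨h.2.1.1, h.2.2.1⟩, h.2.2.2.1⟩,
    fun h => ⟨trivial, ⟨h.1.1, trivial, fun _ => by split <;> omega⟩, h.1.2, h.2,
      List.isChain_singleton p⟩⟩

theorem isBkr_cons_cons {k r m : ℕ} {p q : ℕ × Bool} {t : List (ℕ × Bool)} :
    IsBkr k r (m + 1) (p :: q :: t) ↔
      IsPart k r p ∧ CanFollow k r p q ∧ IsBkr k r m (q :: t) := by
  simp only [IsBkr, isOverList_cons_cons, List.forall_mem_cons, List.getLast?_cons_cons,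
    List.length_cons, Nat.add_right_cancel_iff, IsPart, CanFollow]
  constructor
  · rintro ⟨hlen, ⟨hp, hqp, hdup, hov⟩, ⟨hresp, hresq, hres⟩, hlast, hchain⟩
    obtain ⟨hstep, hchain⟩ := List.isChain_cons_cons.mp hchain
    exact ⟨⟨hp, hresp⟩, ⟨⟨hov.1 q (List.mem_cons_self ..), hresq⟩, hqp, hdup, hstep⟩, hlen,
      hov, ⟨hresq, hres⟩, hlast, hchain⟩
  · rintro ⟨⟨hp, hresp⟩, ⟨_, hqp, hdup, hstep⟩, hlen, hov, ⟨hresq, hres⟩, hlast, hchain⟩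
    exact ⟨hlen, ⟨hp, hqp, hdup, hov⟩, ⟨hresp, hresq, hres⟩, hlast,
      List.isChain_cons_cons.mpr ⟨hstep, hchain⟩⟩

def bkrLists (k r : ℕ) : ℕ → ℕ × Bool → Finset (List (ℕ × Bool))
  | 0, _ => ∅
  | 1, p => if IsPart k r p ∧ ord p ≤ 2 * r + 1 then {[p]} else ∅
  | m + 2, p =>
    if IsPart k r p then
      (nextParts k r p).biUnion fun q => (bkrLists k r (m + 1) q).image (List.cons p)
    else ∅

theorem mem_bkrLists {k r : ℕ} :
    ∀ {m : ℕ} {p : ℕ × Bool} {l : List (ℕ × Bool)},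
      l ∈ bkrLists k r m p ↔ IsBkr k r m l ∧ l.head? = some p
  | 0, p, l => by
    simp only [bkrLists, Finset.notMem_empty, false_iff, not_and]
    rintro ⟨hlen, -⟩
    simp [List.length_eq_zero_iff.mp hlen]
  | 1, p, l => by
    have hshape : IsBkr k r 1 l → ∃ x, l = [x] := fun h => List.length_eq_one_iff.mp h.1
    simp only [bkrLists]
    split_ifs with hp
    · rw [Finset.mem_singleton]
      constructor
      · rintro rfl
        exact ⟨isBkr_singleton.mpr hp, rfl⟩
      · rintro ⟨hl, hhead⟩
        obtain ⟨x, rfl⟩ := hshape hl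
        simpa using hhead
    · simp only [Finset.notMem_empty, false_iff, not_and]
      intro hl hhead
      obtain ⟨x, rfl⟩ := hshape hl
      cases Option.some.inj hhead
      exact hp (isBkr_singleton.mp hl)
  | m + 2, p, l => by
    have hshape : IsBkr k r (m + 2) l → ∃ x q t, l = x :: q :: t := by
      rcases l with _ | ⟨x, _ | ⟨q, t⟩⟩ <;> intro h <;> simp [IsBkr] at h ⊢
    simp only [bkrLists]
    split_ifs with hp
    · simp only [Finset.mem_biUnion, Finset.mem_image, mem_nextParts, mem_bkrLists]
      constructor
      · rintro ⟨q, hq, _ | ⟨q', t⟩, ⟨ht, hhead⟩, rfl⟩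
        · simp at hhead
        cases Option.some.inj hhead
        exact ⟨isBkr_cons_cons.mpr ⟨hp, hq, ht⟩, rfl⟩
      · rintro ⟨hl, hhead⟩
        obtain ⟨x, q, t, rfl⟩ := hshape hl
        cases Option.some.inj hhead
        obtain ⟨-, hq, ht⟩ := isBkr_cons_cons.mp hl
        exact ⟨q, hq, q :: t, ⟨ht, rfl⟩, rfl⟩
    · simp only [Finset.notMem_empty, false_iff, not_and]
      intro hl hhead
      obtain ⟨x, q, t, rfl⟩ := hshape hl
      cases Option.some.inj hhead
      exact hp (isBkr_cons_cons.mp hl).1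

def bkrPoly (k r m : ℕ) (p : ℕ × Bool) : Polynomial ℚ :=
  ∑ l ∈ bkrLists k r m p, X ^ wtL l

theorem gkr_eq_pq_bkrPoly (k r m : ℕ) (p : ℕ × Bool) : gkr k r m p = pq (bkrPoly k r m p) := by
  have hset : (fun l => IsBkr k r m l ∧ l.head? = some p) = (· ∈ bkrLists k r m p) := by
    ext l
    exact mem_bkrLists.symm
  rw [gkr, hset,
    Finset.tsum_subtype (bkrLists k r m p) fun l => (MvPowerSeries.X 2 : S3) ^ wtL l]
  simp [bkrPoly, pq]

theorem bkrPoly_one (k r : ℕ) (p : ℕ × Bool) :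
    bkrPoly k r 1 p = if IsPart k r p ∧ ord p ≤ 2 * r + 1 then X ^ p.1 else 0 := by
  unfold bkrPoly bkrLists
  split_ifs <;> simp [wtL]

theorem bkrPoly_succ {k r m : ℕ} (hm : 1 ≤ m) {p : ℕ × Bool} (hp : IsPart k r p) :
    bkrPoly k r (m + 1) p = X ^ p.1 * ∑ q ∈ nextParts k r p, bkrPoly k r m q := by
  obtain ⟨m, rfl⟩ := Nat.exists_eq_add_of_le' hm
  rw [bkrPoly, bkrLists, if_pos hp, Finset.sum_biUnion, Finset.mul_sum]
  · refine Finset.sum_congr rfl fun q _ => ?_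
    rw [Finset.sum_image List.cons_injective.injOn, bkrPoly, Finset.mul_sum]
    simp [wtL, pow_add]
  · intro q _ q' _ hne
    rw [Function.onFun, Finset.disjoint_left]
    simp only [Finset.mem_image]
    rintro _ ⟨t, ht, rfl⟩ ⟨t', ht', h⟩
    cases List.cons_injective h
    exact hne (Option.some.inj ((mem_bkrLists.mp ht).2.symm.trans (mem_bkrLists.mp ht').2))

theorem exists_eq_mul_add_of_mod_eq {k r a : ℕ} (hrk : r ≤ k) (ha : 0 < a)
    (h : a % k = r % k) : ∃ t, a = k * t + r := by
  have hra : r ≤ a := by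
    by_contra hlt
    rcases hrk.lt_or_eq with hrk | rfl
    · rw [Nat.mod_eq_of_lt (by omega), Nat.mod_eq_of_lt hrk] at h
      omega
    · rw [Nat.mod_eq_of_lt (by omega), Nat.mod_self] at h
      omega
  obtain ⟨t, ht⟩ := (Nat.modEq_iff_dvd' hra).mp h.symm
  exact ⟨t, by omega⟩

theorem nextParts_overline (k r a : ℕ) : nextParts k r (a, true) = nextParts k r (a, false) := by
  ext q
  simp only [mem_nextParts, CanFollow, ord_true, ord_false]
  constructor
  · rintro ⟨hq, hle, hne, hchain⟩
    have hlt : ord q ≠ 2 * a + 1 := fun h => hne ⟨trivial, ord_injective (by rw [h, ord_true])⟩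
    exact ⟨hq, by omega, by simp, fun j hj => by have := hchain j hj; omega⟩
  · rintro ⟨hq, hle, -, hchain⟩
    refine ⟨hq, by omega, ?_, fun j hj => by have := hchain j hj; omega⟩
    rintro ⟨-, rfl⟩
    simp at hle

theorem nextParts_one (k r : ℕ) : nextParts k r (1, false) = {(1, false)} := by
  ext ⟨v, b⟩
  simp only [mem_nextParts, CanFollow, IsPart, Finset.mem_singleton, Prod.mk.injEq]
  constructor
  · rintro ⟨⟨hv, -⟩, hle, -⟩
    cases b <;> simp [ord] at hle ⊢ <;> omega
  · rintro ⟨rfl, rfl⟩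
    exact ⟨⟨one_pos, by simp⟩, le_rfl, by simp, fun _ _ => by omega⟩

theorem nextParts_succ {k r a : ℕ} (hrk : r ≤ k) (ha : ∀ t, a ≠ k * t + r) :
    nextParts k r (a + 1, false) = insert (a + 1, false) (nextParts k r (a, false)) := by
  ext q
  simp only [Finset.mem_insert, mem_nextParts, CanFollow, ord_false]
  constructor
  · rintro ⟨hq, hle, -, hchain⟩
    by_cases hlt : ord q ≤ 2 * a
    · exact Or.inr ⟨hq, hlt, by simp, fun j hj => by have := hchain j hj; omega⟩
    rcases (show ord q = 2 * a + 1 ∨ ord q = 2 * (a + 1) by omega) with h | h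
    · obtain rfl : q = (a, true) := ord_injective (by rw [h, ord_true])
      obtain ⟨t, rfl⟩ := exists_eq_mul_add_of_mod_eq hrk hq.1 (hq.2 rfl)
      exact absurd rfl (ha t)
    · exact Or.inl (ord_injective (by rw [h, ord_false]))
  · rintro (rfl | ⟨hq, hle, -, hchain⟩)
    · exact ⟨⟨Nat.succ_pos a, by simp⟩, by simp, by simp,
        fun _ hj => by rw [ord_false] at hj; omega⟩
    · refine ⟨hq, by omega, by simp, fun j hj => ?_⟩
      have := hchain j hj
      have := ha j
      omega

theorem nextParts_level_start {k r : ℕ} (hr : 1 ≤ r) (hk : 1 ≤ k) (i : ℕ) :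
    nextParts k r (k * i + r + 1, false) = {(k * i + r + 1, false), (k * i + r, true)} := by
  ext q
  simp only [Finset.mem_insert, Finset.mem_singleton, mem_nextParts, CanFollow, ord_false]
  constructor
  · rintro ⟨-, hle, -, hchain⟩
    have hgt : 2 * (k * i + r) < ord q := by
      by_contra h
      have := hchain i (by omega)
      omega
    rcases (show ord q = 2 * (k * i + r) + 1 ∨ ord q = 2 * (k * i + r + 1) by omega) with h | h
    · exact Or.inr (ord_injective (by rw [h, ord_true]))
    · exact Or.inl (ord_injective (by rw [h, ord_false]))
  · have hchain : ∀ q : ℕ × Bool, 2 * (k * i + r) < ord q → ∀ j, ord q ≤ 2 * (k * j + r) →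
        2 * (k * i + r + 1) ≤ 2 * (k * j + r) + 1 := fun q hq j hj => by
      have : i < j := Nat.lt_of_mul_lt_mul_left (a := k) (by omega)
      have : k * (i + 1) ≤ k * j := Nat.mul_le_mul_left k this
      rw [Nat.mul_succ] at this
      omega
    rintro (rfl | rfl)
    · exact ⟨⟨by omega, by simp⟩, le_rfl, by simp, hchain _ (by rw [ord_false]; omega)⟩
    · exact ⟨⟨by omega, fun _ => Nat.mul_add_mod_self_left ..⟩, by simp, by simp,
        hchain _ (by simp)⟩

theorem bkrPoly_overline {k r a : ℕ} (ha : 0 < a) (hres : a % k = r % k) (m : ℕ) :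
    bkrPoly k r m (a, true) = bkrPoly k r m (a, false) := by
  have hpart : IsPart k r (a, true) := ⟨ha, fun _ => hres⟩
  have hpart' : IsPart k r (a, false) := ⟨ha, by simp⟩
  match m with
  | 0 => rfl
  | 1 =>
    simp only [bkrPoly_one, hpart, hpart', true_and, ord_true, ord_false]
    congr 1
    exact propext (by omega)
  | m + 2 =>
    rw [bkrPoly_succ (by omega) hpart, bkrPoly_succ (by omega) hpart', nextParts_overline]

theorem bkrPoly_one_false_succ {k r m : ℕ} (hm : 1 ≤ m) :
    bkrPoly k r (m + 1) (1, false) = X * bkrPoly k r m (1, false) := by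
  rw [bkrPoly_succ hm ⟨one_pos, by simp⟩, nextParts_one, Finset.sum_singleton, pow_one]

theorem bkrPoly_false_succ {k r m a : ℕ} (hrk : r ≤ k) (hm : 1 ≤ m) (ha : 0 < a)
    (hat : ∀ t, a ≠ k * t + r) :
    bkrPoly k r (m + 1) (a + 1, false) =
      X * bkrPoly k r (m + 1) (a, false) + X ^ (a + 1) * bkrPoly k r m (a + 1, false) := by
  have hnot : (a + 1, false) ∉ nextParts k r (a, false) := fun h => by
    have := (mem_nextParts.mp h).2.1
    simp at this
  rw [bkrPoly_succ hm ⟨a.succ_pos, by simp⟩, bkrPoly_succ hm ⟨ha, by simp⟩,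
    nextParts_succ hrk hat, Finset.sum_insert hnot]
  ring

theorem bkrPoly_level_start {k r m : ℕ} (hr : 1 ≤ r) (hk : 1 ≤ k) (hm : 1 ≤ m) (i : ℕ) :
    bkrPoly k r (m + 1) (k * i + r + 1, false) =
      X ^ (k * i + r + 1) *
        (bkrPoly k r m (k * i + r + 1, false) + bkrPoly k r m (k * i + r, false)) := by
  rw [bkrPoly_succ hm ⟨by omega, by simp⟩, nextParts_level_start hr hk,
    Finset.sum_pair (by simp), bkrPoly_overline (by omega) (Nat.mul_add_mod_self_left ..)]

theorem succ_choose_two (i : ℕ) : (i + 1).choose 2 = i.choose 2 + i := by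
  rw [Nat.choose_succ_succ', Nat.choose_one_right, add_comm]

-- The claimed generating function with j = i + 1 and largest part a, which lies in the block
-- k * i + r - k < a ≤ k * i + r.
def closedForm (k r m i a : ℕ) : Polynomial ℚ :=
  X ^ (m + k * i.choose 2 + r * i + a - (i + 1)) * qBinom (m + a - (i + 2)) (a - 1)

theorem closedForm_one_zero (k r : ℕ) {a : ℕ} (ha : 0 < a) : closedForm k r 1 0 a = X ^ a := by
  rw [closedForm, show 1 + a - (0 + 2) = a - 1 by omega, qBinom_self, mul_one]
  congr 1
  simp

theorem closedForm_one_of_pos (k r : ℕ) {i a : ℕ} (hi : 1 ≤ i) (hia : i < a) :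
    closedForm k r 1 i a = 0 := by
  rw [closedForm, qBinom_eq_zero_of_lt (by omega), mul_zero]

theorem closedForm_succ_zero_one (k r m : ℕ) :
    closedForm k r (m + 1) 0 1 = X * closedForm k r m 0 1 := by
  simp only [closedForm, Nat.choose_zero_succ, mul_zero, add_zero, Nat.sub_self,
    qBinom_zero_right, mul_one, ← pow_succ']
  congr 1

theorem closedForm_succ_succ (k r : ℕ) {m i a : ℕ} (hm : 1 ≤ m) (hia : i < a) :
    closedForm k r (m + 1) i (a + 1) =
      X * closedForm k r (m + 1) i a + X ^ (a + 1) * closedForm k r m i (a + 1) := by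
  set e := m + k * i.choose 2 + r * i + a - (i + 1)
  set n := m + a - (i + 2)
  obtain ⟨b, rfl⟩ : ∃ b, a = b + 1 := ⟨a - 1, by omega⟩
  rw [closedForm, closedForm, closedForm,
    show m + 1 + (b + 1 + 1) - (i + 2) = n + 1 + 1 by omega,
    show m + 1 + (b + 1) - (i + 2) = n + 1 by omega,
    show m + (b + 1 + 1) - (i + 2) = n + 1 by omega,
    show m + 1 + k * i.choose 2 + r * i + (b + 1 + 1) - (i + 1) = e + 2 by omega,
    show m + 1 + k * i.choose 2 + r * i + (b + 1) - (i + 1) = e + 1 by omega,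
    show m + k * i.choose 2 + r * i + (b + 1 + 1) - (i + 1) = e + 1 by omega,
    Nat.add_sub_cancel, Nat.add_sub_cancel, qBinom_succ_succ (n + 1)]
  ring

theorem closedForm_level_start (k r : ℕ) {m i : ℕ} (hm : 1 ≤ m) (hr : 1 ≤ r) (hk : 1 ≤ k) :
    closedForm k r (m + 1) (i + 1) (k * i + r + 1) =
      X ^ (k * i + r + 1) *
        (closedForm k r m (i + 1) (k * i + r + 1) + closedForm k r m i (k * i + r)) := by
  have hik : i ≤ k * i := Nat.le_mul_of_pos_left i hk
  set c := k * i.choose 2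
  have hc : k * (i + 1).choose 2 = c + k * i := by rw [succ_choose_two, mul_add]
  set n := m + k * i + r - (i + 2)
  set e := m + c + r * i + k * i + r - (i + 1)
  rw [closedForm, closedForm, closedForm, hc, mul_add_one r i,
    show m + 1 + (k * i + r + 1) - (i + 1 + 2) = n + 1 by omega,
    show m + (k * i + r + 1) - (i + 1 + 2) = n by omega,
    show m + (k * i + r) - (i + 2) = n by omega,
    show k * i + r + 1 - 1 = (k * i + r - 1) + 1 by omega,
    show m + 1 + (c + k * i) + (r * i + r) + (k * i + r + 1) - (i + 1 + 1) = e + (k * i + r + 1)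
      by omega,
    show m + (c + k * i) + (r * i + r) + (k * i + r + 1) - (i + 1 + 1) = e + (k * i + r)
      by omega,
    show m + c + r * i + (k * i + r) - (i + 1) = e by omega, qBinom_succ_succ]
  rw [show k * i + r - 1 + 1 = k * i + r by omega]
  ring

theorem lt_of_mul_add_lt_add {k r i a : ℕ} (hr : 1 ≤ r) (hrk : r ≤ k) (ha : 0 < a)
    (hlo : k * i + r < a + k) : i < a := by
  rcases i with _ | i
  · exact ha
  · have := Nat.le_mul_of_pos_left i (hr.trans hrk)
    rw [Nat.mul_succ] at hlo
    omega

theorem ne_mul_add_of_lt_of_lt {k r i a : ℕ} (hlo : k * i + r < a + k) (hhi : a < k * i + r)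
    (t : ℕ) : a ≠ k * t + r := by
  rintro rfl
  have h₁ : i < t + 1 := Nat.lt_of_mul_lt_mul_left (a := k) (by rw [Nat.mul_succ]; omega)
  have h₂ : t < i := Nat.lt_of_mul_lt_mul_left (a := k) (by omega)
  omega

theorem bkrPoly_eq_closedForm {k r m : ℕ} (hr : 1 ≤ r) (hrk : r ≤ k) (hm : 1 ≤ m) {i a : ℕ}
    (ha : 0 < a) (hlo : k * i + r < a + k) (hhi : a ≤ k * i + r) :
    bkrPoly k r m (a, false) = closedForm k r m i a := by
  have hk : 1 ≤ k := hr.trans hrk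
  induction m, hm using Nat.le_induction generalizing i a with
  | base =>
    rw [bkrPoly_one]
    rcases i with _ | i
    · rw [if_pos ⟨⟨ha, by simp⟩, by simp; omega⟩, closedForm_one_zero k r ha]
    · have := Nat.le_mul_of_pos_left i hk
      rw [Nat.mul_succ] at hlo
      rw [if_neg (by simp; omega), closedForm_one_of_pos k r (Nat.succ_pos i)
        (lt_of_mul_add_lt_add hr hrk ha (by rw [Nat.mul_succ]; omega))]
  | succ m hm ih =>
    induction a with
    | zero => omega
    | succ a iha =>
      by_cases hprev : 0 < a ∧ k * i + r < a + k
      · rw [bkrPoly_false_succ hrk hm hprev.1 (ne_mul_add_of_lt_of_lt hprev.2 hhi),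
          iha hprev.1 hprev.2 (by omega), ih ha hlo hhi,
          closedForm_succ_succ k r hm (lt_of_mul_add_lt_add hr hrk hprev.1 hprev.2)]
      rcases Nat.eq_zero_or_pos a with rfl | ha'
      · obtain rfl : i = 0 := by
          by_contra hi
          have := Nat.le_mul_of_pos_right k (Nat.pos_of_ne_zero hi)
          omega
        rw [bkrPoly_one_false_succ hm, ih ha hlo hhi, closedForm_succ_zero_one]
      · obtain ⟨i, rfl⟩ : ∃ i', i = i' + 1 :=
          Nat.exists_eq_succ_of_ne_zero (by rintro rfl; omega)
        obtain rfl : a = k * i + r := by rw [Nat.mul_succ] at hlo hprev; omega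
        rw [bkrPoly_level_start hr hk hm, ih ha hlo hhi, ih (i := i) (by omega) (by omega) le_rfl,
          closedForm_level_start k r hm hr hk]

open MvPowerSeries in
/-- for m ≥ 1 and (j = 1, 1 ≤ s ≤ r) or (j ≥ 2, -k+r+1 ≤ s ≤ r),
the generating function for overpartitions in B_{k,r}(m) with largest part the
non-overlined part k(j-1)+s is
q^{m-j+k·C(j,2)+r(j-1)+s} [m-j+k(j-1)+s-1, k(j-1)+s-1]_q. -/
theorem stmt10 (k r m j : ℕ) (s : ℤ) (hr : 1 ≤ r) (hrk : r ≤ k) (hm : 1 ≤ m)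
    (hjs : (j = 1 ∧ 1 ≤ s ∧ s ≤ (r : ℤ)) ∨
      (2 ≤ j ∧ -(k : ℤ) + r + 1 ≤ s ∧ s ≤ (r : ℤ))) :
    gkr k r m ((((k : ℤ) * (j - 1) + s).toNat, false)) =
      (X 2 : S3) ^
          ((m : ℤ) - j + k * Nat.choose j 2 + r * ((j : ℤ) - 1) + s).toNat *
        pq (gauss 1 ((m : ℤ) - j + k * ((j : ℤ) - 1) + s - 1)
          ((k : ℤ) * ((j : ℤ) - 1) + s - 1)) := by
  obtain ⟨i, rfl⟩ : ∃ i, j = i + 1 := ⟨j - 1, by omega⟩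
  simp only [Nat.cast_add, Nat.cast_one, add_sub_cancel_right, succ_choose_two, mul_add]
  set a := ((k : ℤ) * i + s).toNat
  have hki : i = 0 ∧ k * i = 0 ∨ k ≤ k * i := by
    rcases i with _ | i
    · simp
    · exact Or.inr (Nat.le_mul_of_pos_right k i.succ_pos)
  zify at hki
  have ha : 0 < a := by omega
  have hlo : k * i + r < a + k := by omega
  have hhi : a ≤ k * i + r := by omega
  have hia : i < a := lt_of_mul_add_lt_add hr hrk ha hlo
  rw [gkr_eq_pq_bkrPoly, bkrPoly_eq_closedForm hr hrk hm ha hlo hhi, closedForm, pq, map_mul,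
    map_pow, aeval_X, ← pq,
    show (m : ℤ) - (i + 1) + k * i + s - 1 = ((m + a - (i + 2) : ℕ) : ℤ) by omega,
    show (k : ℤ) * i + s - 1 = ((a - 1 : ℕ) : ℤ) by omega, gauss_one_natCast]
  congr 2
  omega
end
end

section
/- There is a bijection between (k,k)-overpartitions of n with j overlined parts and m parts, and k-partitions of n with j overlined parts and m+(k-1)j parts, given by replacing each overlined part overline(kζ) by k-1 copies of ζ together with one overlined ζ. -/
noncomputable section

/-- The number of overlined parts of an overpartition (parts are pairs
(value, overlined?), collected into a multiset). -/
def olCount (π : Multiset (ℕ × Bool)) : ℕ := (π.filter (fun p => p.2 = true)).card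

/-- The weight (sum of part values) of an overpartition. -/
def wt (π : Multiset (ℕ × Bool)) : ℕ := (π.map Prod.fst).sum

/-- An overpartition: all parts positive and each value has at most one
overlined occurrence. -/
def IsOverMS (π : Multiset (ℕ × Bool)) : Prop :=
  (∀ p ∈ π, 0 < p.1) ∧ ∀ a : ℕ, π.count (a, true) ≤ 1
/-- A (k,k)-overpartition: an overpartition in which only parts divisible by
k may be overlined. -/
def IsKKOver (k : ℕ) (π : Multiset (ℕ × Bool)) : Prop :=
  IsOverMS π ∧ ∀ p ∈ π, p.2 = true → k ∣ p.1

/-- A k-partition: a partition in which the k-th occurrence of a part may be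
overlined, i.e. each value has at most one overlined occurrence, and a value
with an overlined occurrence occurs at least k times in total. -/
def IsKPart (k : ℕ) (π : Multiset (ℕ × Bool)) : Prop :=
  (∀ p ∈ π, 0 < p.1) ∧
    ∀ a : ℕ, π.count (a, true) ≤ 1 ∧ (π.count (a, true) = 1 → k ≤ π.count (a, false) + 1)

/-- The map replacing each overlined part overline(kζ) of a (k,k)-overpartition
by k-1 non-overlined copies of ζ together with one overlined ζ. -/
def expandMap (k : ℕ) (π : Multiset (ℕ × Bool)) : Multiset (ℕ × Bool) :=
  π.bind fun p =>
    if p.2 then Multiset.replicate (k - 1) (p.1 / k, false) + {(p.1 / k, true)}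
    else {p}

/-!
On a (k,k)-overpartition `π` the map is described by multiplicities: `expandMap k π` contains
`(a, true)` as often as `π` contains `(k a, true)`, and `(a, false)` as often as `π` contains
`(a, false)` plus `k - 1` times as often as it contains `(k a, true)`. Solving these equations
gives the inverse `contractMap`: scale every overlined part by `k` and remove `k - 1` plain copies
of its value, which the k-partition condition guarantees to exist.
As `expandMap` preserves the weight and the number of overlined parts and adds `k - 1` parts for
each overlined part, the inverse maps the second set of the statement into the first.
-/

open Multiset

section

variable {k : ℕ}

@[simp] theorem olCount_zero : olCount 0 = 0 := rfl

@[simp] theorem olCount_cons (a : ℕ) (b : Bool) (π : Multiset (ℕ × Bool)) :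
    olCount ((a, b) ::ₘ π) = olCount π + b.toNat := by
  cases b <;> simp [olCount]

@[simp] theorem wt_cons (p : ℕ × Bool) (π : Multiset (ℕ × Bool)) :
    wt (p ::ₘ π) = p.1 + wt π := by
  simp [wt]

@[simp] theorem olCount_add (π ρ : Multiset (ℕ × Bool)) :
    olCount (π + ρ) = olCount π + olCount ρ := by
  simp [olCount]

@[simp] theorem wt_add (π ρ : Multiset (ℕ × Bool)) : wt (π + ρ) = wt π + wt ρ := by
  simp [wt]

@[simp] theorem olCount_replicate_plain (n a : ℕ) : olCount (replicate n (a, false)) = 0 := by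
  induction n <;> simp_all [replicate_succ]

@[simp] theorem wt_replicate (n : ℕ) (p : ℕ × Bool) : wt (replicate n p) = n * p.1 := by
  simp [wt]

@[simp] theorem expandMap_zero (k : ℕ) : expandMap k 0 = 0 := zero_bind _

@[simp] theorem expandMap_cons_plain (k a : ℕ) (π : Multiset (ℕ × Bool)) :
    expandMap k ((a, false) ::ₘ π) = (a, false) ::ₘ expandMap k π := by
  simp [expandMap]

@[simp] theorem expandMap_cons_overlined (k a : ℕ) (π : Multiset (ℕ × Bool)) :
    expandMap k ((a, true) ::ₘ π) =
      replicate (k - 1) (a / k, false) + (a / k, true) ::ₘ expandMap k π := by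
  simp [expandMap, add_assoc]

@[elab_as_elim]
theorem expandMap_induction {P : Multiset (ℕ × Bool) → Prop} (zero : P 0)
    (plain : ∀ a π, P π → P ((a, false) ::ₘ π))
    (overlined : ∀ c π, P π → P ((k * c, true) ::ₘ π))
    (π : Multiset (ℕ × Bool)) (hπ : ∀ p ∈ π, p.2 = true → k ∣ p.1) : P π := by
  induction π using Multiset.induction with
  | empty => exact zero
  | cons p π ih =>
    have ih := ih fun q hq => hπ q (mem_cons_of_mem hq)
    obtain ⟨a, _ | _⟩ := p
    · exact plain a π ih
    · obtain ⟨c, rfl⟩ := hπ _ (mem_cons_self _ _) rfl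
      exact overlined c π ih

theorem count_expandMap_overlined (hk : 0 < k) {π : Multiset (ℕ × Bool)}
    (hπ : ∀ p ∈ π, p.2 = true → k ∣ p.1) (a : ℕ) :
    count (a, true) (expandMap k π) = count (k * a, true) π := by
  refine expandMap_induction ?_ (fun b π ih => ?_) (fun c π ih => ?_) π hπ
  · simp
  · simp [ih]
  · simp [count_cons, ih, hk.ne', Nat.mul_div_cancel_left c hk, mem_replicate]

theorem count_expandMap_plain (hk : 0 < k) {π : Multiset (ℕ × Bool)}
    (hπ : ∀ p ∈ π, p.2 = true → k ∣ p.1) (a : ℕ) :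
    count (a, false) (expandMap k π) = count (a, false) π + (k - 1) * count (k * a, true) π := by
  refine expandMap_induction ?_ (fun b π ih => ?_) (fun c π ih => ?_) π hπ
  · simp
  · simp [count_cons, ih]; split_ifs <;> omega
  · obtain rfl | hac := eq_or_ne a c
    · simp [ih, Nat.mul_div_cancel_left a hk]
      ring
    · simp [ih, hk.ne', count_replicate, Nat.mul_div_cancel_left c hk, hac, hac.symm]

theorem card_expandMap (k : ℕ) (π : Multiset (ℕ × Bool)) :
    card (expandMap k π) = card π + (k - 1) * olCount π := by
  induction π using Multiset.induction with
  | empty => simp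
  | cons p π ih =>
    obtain ⟨a, _ | _⟩ := p
    · simp [ih]; ring
    · simp [ih]; ring

theorem olCount_expandMap (k : ℕ) (π : Multiset (ℕ × Bool)) :
    olCount (expandMap k π) = olCount π := by
  induction π using Multiset.induction with
  | empty => simp
  | cons p π ih =>
    obtain ⟨a, _ | _⟩ := p <;> simp [ih]

theorem wt_expandMap (hk : 0 < k) {π : Multiset (ℕ × Bool)}
    (hπ : ∀ p ∈ π, p.2 = true → k ∣ p.1) : wt (expandMap k π) = wt π := by
  refine expandMap_induction ?_ (fun b π ih => ?_) (fun c π ih => ?_) π hπ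
  · simp
  · simp [ih]
  · simp [ih, Nat.mul_div_cancel_left c hk]
    rw [Nat.sub_one_mul]
    have := Nat.le_mul_of_pos_left c hk
    omega

theorem pos_of_mem_expandMap (hk : 0 < k) {π : Multiset (ℕ × Bool)}
    (hπ : ∀ p ∈ π, p.2 = true → k ∣ p.1) (hpos : ∀ p ∈ π, 0 < p.1) :
    ∀ p ∈ expandMap k π, 0 < p.1 := by
  revert hpos
  refine expandMap_induction ?_ (fun b π ih => ?_) (fun c π ih => ?_) π hπ
  · simp
  · simp_all
  · simp only [mem_cons, forall_eq_or_imp, expandMap_cons_overlined, mem_add, mem_replicate,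
      Nat.mul_div_cancel_left c hk]
    rintro ⟨hc, hπ⟩ p (⟨-, rfl⟩ | rfl | hp)
    exacts [Nat.pos_of_mul_pos_left hc, Nat.pos_of_mul_pos_left hc, ih hπ p hp]

theorem IsKKOver.isKPart_expandMap (hk : 0 < k) {π : Multiset (ℕ × Bool)} (h : IsKKOver k π) :
    IsKPart k (expandMap k π) := by
  obtain ⟨⟨hpos, hle⟩, hdvd⟩ := h
  refine ⟨pos_of_mem_expandMap hk hdvd hpos, fun a => ?_⟩
  rw [count_expandMap_overlined hk hdvd, count_expandMap_plain hk hdvd]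
  refine ⟨hle _, fun h => ?_⟩
  rw [h]
  omega

def overlinedValues (σ : Multiset (ℕ × Bool)) : Multiset ℕ := (σ.filter (·.2)).map Prod.fst

theorem count_overlinedValues (σ : Multiset (ℕ × Bool)) (a : ℕ) :
    count a (overlinedValues σ) = count (a, true) σ := by
  induction σ using Multiset.induction with
  | empty => simp [overlinedValues]
  | cons p σ ih =>
    obtain ⟨b, _ | _⟩ := p
    · simp_all [overlinedValues]
    · simp_all [overlinedValues, count_cons]

def contractMap (k : ℕ) (σ : Multiset (ℕ × Bool)) : Multiset (ℕ × Bool) :=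
  (overlinedValues σ).map (fun c => (k * c, true)) +
    (σ.filter (fun p => p.2 = false) - (k - 1) • (overlinedValues σ).map (·, false))

theorem count_contractMap_overlined_mul (hk : 0 < k) (σ : Multiset (ℕ × Bool)) (c : ℕ) :
    count (k * c, true) (contractMap k σ) = count (c, true) σ := by
  have hinj : Function.Injective fun c => (k * c, true) := fun a b h => by
    simpa [hk.ne'] using h
  rw [contractMap, count_add, count_map_eq_count' _ _ hinj, count_overlinedValues]
  simp

theorem count_contractMap_overlined_of_not_dvd (σ : Multiset (ℕ × Bool)) {a : ℕ} (ha : ¬ k ∣ a) :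
    count (a, true) (contractMap k σ) = 0 := by
  simpa [contractMap] using fun c _ h => ha ⟨c, h.symm⟩

theorem count_contractMap_plain (σ : Multiset (ℕ × Bool)) (a : ℕ) :
    count (a, false) (contractMap k σ) = count (a, false) σ - (k - 1) * count (a, true) σ := by
  have hinj : Function.Injective fun c : ℕ => (c, false) := fun a b h => by simpa using h
  rw [contractMap, count_add, count_sub, count_nsmul, count_map_eq_count' _ _ hinj,
    count_overlinedValues]
  simp

theorem dvd_of_mem_contractMap {σ : Multiset (ℕ × Bool)} :
    ∀ p ∈ contractMap k σ, p.2 = true → k ∣ p.1 := by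
  rintro ⟨a, b⟩ hp (rfl : b = true)
  by_contra ha
  exact (count_pos.2 hp).ne' (count_contractMap_overlined_of_not_dvd σ ha)

theorem pos_of_mem_contractMap (hk : 0 < k) {σ : Multiset (ℕ × Bool)} (hpos : ∀ p ∈ σ, 0 < p.1) :
    ∀ p ∈ contractMap k σ, 0 < p.1 := by
  intro p hp
  rcases mem_add.1 hp with h | h
  · obtain ⟨c, hc, rfl⟩ := mem_map.1 h
    have hc : (c, true) ∈ σ := by simpa [overlinedValues] using hc
    exact Nat.mul_pos hk (hpos _ hc)
  · exact hpos p (mem_of_mem_filter (mem_of_le tsub_le_self h))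

theorem expandMap_contractMap (hk : 0 < k) {σ : Multiset (ℕ × Bool)} (hσ : IsKPart k σ) :
    expandMap k (contractMap k σ) = σ := by
  ext ⟨a, _ | _⟩
  · rw [count_expandMap_plain hk dvd_of_mem_contractMap, count_contractMap_plain,
      count_contractMap_overlined_mul hk]
    -- an overlined `a` comes with at least `k - 1` plain copies, so the subtraction is exact
    obtain ⟨hle, hge⟩ := hσ.2 a
    rcases Nat.le_one_iff_eq_zero_or_eq_one.1 hle with h | h
    · rw [h]; omega
    · have := hge h
      rw [h]; omega
  · rw [count_expandMap_overlined hk dvd_of_mem_contractMap, count_contractMap_overlined_mul hk]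

theorem contractMap_expandMap (hk : 0 < k) {π : Multiset (ℕ × Bool)}
    (hπ : ∀ p ∈ π, p.2 = true → k ∣ p.1) : contractMap k (expandMap k π) = π := by
  ext ⟨a, _ | _⟩
  · rw [count_contractMap_plain, count_expandMap_plain hk hπ, count_expandMap_overlined hk hπ]
    omega
  · by_cases ha : k ∣ a
    · obtain ⟨c, rfl⟩ := ha
      rw [count_contractMap_overlined_mul hk, count_expandMap_overlined hk hπ]
    · rw [count_contractMap_overlined_of_not_dvd _ ha, eq_comm, count_eq_zero]
      exact fun h => ha (hπ _ h rfl)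

theorem IsKPart.isKKOver_contractMap (hk : 0 < k) {σ : Multiset (ℕ × Bool)} (hσ : IsKPart k σ) :
    IsKKOver k (contractMap k σ) := by
  refine ⟨⟨pos_of_mem_contractMap hk hσ.1, fun a => ?_⟩, dvd_of_mem_contractMap⟩
  by_cases ha : k ∣ a
  · obtain ⟨c, rfl⟩ := ha
    rw [count_contractMap_overlined_mul hk]
    exact (hσ.2 c).1
  · rw [count_contractMap_overlined_of_not_dvd _ ha]
    exact zero_le_one

end

/-- this map is a bijection between (k,k)-overpartitions of n
with j overlined parts and m parts, and k-partitions of n with j overlined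
parts and m + (k-1)j parts. -/
theorem stmt18 (k j m n : ℕ) (hk : 0 < k) :
    Set.BijOn (expandMap k)
      {π : Multiset (ℕ × Bool) |
        IsKKOver k π ∧ Multiset.card π = m ∧ olCount π = j ∧ wt π = n}
      {π : Multiset (ℕ × Bool) |
        IsKPart k π ∧ Multiset.card π = m + (k - 1) * j ∧ olCount π = j ∧ wt π = n} := by
  refine Set.InvOn.bijOn ⟨fun π hπ => contractMap_expandMap hk hπ.1.2,
    fun σ hσ => expandMap_contractMap hk hσ.1⟩ ?_ ?_
  · rintro π ⟨hπ, hcard, hol, hwt⟩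
    exact ⟨hπ.isKPart_expandMap hk, by rw [card_expandMap, hcard, hol],
      by rw [olCount_expandMap, hol], by rw [wt_expandMap hk hπ.2, hwt]⟩
  · rintro σ ⟨hσ, hcard, hol, hwt⟩
    have hinv := expandMap_contractMap hk hσ
    have hol' : olCount (contractMap k σ) = j := by rw [← olCount_expandMap k, hinv, hol]
    refine ⟨hσ.isKKOver_contractMap hk, ?_, hol', ?_⟩
    · have := card_expandMap k (contractMap k σ)
      rw [hinv, hcard, hol'] at this
      omega
    · rw [← wt_expandMap hk dvd_of_mem_contractMap, hinv, hwt]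
end
end
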